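/- arXiv:2001.01500 — 2 statements merged into one kernel-verified Lean document; each statement's English description precedes it below -/
import Mathlib

section
/- Let n ≥ 2 and let u ∈ ℤ^n be primitive. Let v_1, …, v_{n−1} ∈ ℤ^n be a ℤ-basis of the subgroup Λ = {m ∈ ℤ^n : ⟨m, u⟩ = 0} (i.e., every element of Λ is a unique ℤ-linear combination of the v_j). Then the determinant of the Gram matrix (⟨v_i, v_j⟩)_{1 ≤ i,j ≤ n−1} equals ‖u‖². Equivalently, the (n−1)-dimensional volume of the fundamental parallelepiped of Λ inside the hyperplane u^⊥ equals ‖u‖. -/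
open scoped RealInnerProductSpace

/-- The embedding `ℤ^n → ℝ^n`. -/
noncomputable def toEuc (n : ℕ) (u : Fin n → ℤ) : EuclideanSpace ℝ (Fin n) :=
  WithLp.toLp 2 (fun j => (u j : ℝ))

/-- A vector `u ∈ ℤ^n` is primitive if `u ≠ 0` and whenever `u = k • w` with
`k ∈ ℤ`, `w ∈ ℤ^n`, then `k = 1` or `k = -1`. -/
def IsPrimitiveVec {n : ℕ} (u : Fin n → ℤ) : Prop :=
  u ≠ 0 ∧ ∀ (k : ℤ) (w : Fin n → ℤ), u = k • w → k = 1 ∨ k = -1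

private lemma det_expand_first_col {N : ℕ} (M : Matrix (Fin (N+1)) (Fin (N+1)) ℤ)
    (h : ∀ i : Fin N, M i.succ 0 = 0) :
    M.det = M 0 0 * (M.submatrix Fin.succ Fin.succ).det := by
  rw [Matrix.det_succ_column_zero, Fin.sum_univ_succ]
  simp [h, Fin.succAbove_zero]

private lemma exists_dual {N : ℕ} (u : Fin (N+1) → ℤ) (hu : IsPrimitiveVec u) :
    ∃ w : Fin (N+1) → ℤ, ∑ k, w k * u k = 1 := by
  set I : Ideal ℤ := Ideal.span (Set.range u) with hI
  obtain ⟨g, hg⟩ := (IsPrincipalIdealRing.principal I).principal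
  have hmem : ∀ i, u i ∈ I := fun i => Ideal.subset_span ⟨i, rfl⟩
  have hdvd : ∀ i, g ∣ u i := by
    intro i
    have := hmem i
    rw [hg] at this
    exact (Ideal.mem_span_singleton).1 this
  have hgu : IsUnit g := by
    choose w hw using hdvd
    have : u = g • w := by funext i; simpa [Pi.smul_apply, smul_eq_mul] using hw i
    rcases hu.2 g w this with h | h <;> simp [h]
  have h1 : (1 : ℤ) ∈ I := by
    rw [hg]
    show (1:ℤ) ∈ Ideal.span {g}
    rw [Ideal.span_singleton_eq_top.2 hgu]
    trivial
  rw [hI] at h1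
  obtain ⟨c, hc⟩ := Submodule.mem_span_range_iff_exists_fun ℤ |>.1 h1
  exact ⟨c, by simpa [smul_eq_mul] using hc⟩

private lemma key {N : ℕ} (u : Fin (N+1) → ℤ) (hu : IsPrimitiveVec u)
    (v : Fin N → Fin (N+1) → ℤ)
    (hmem : ∀ j, (∑ k, v j k * u k) = 0)
    (hbasis : ∀ m : Fin (N+1) → ℤ, (∑ k, m k * u k) = 0 →
      ∃! c : Fin N → ℤ, m = ∑ j, c j • v j) :
    (Matrix.of fun i j : Fin N => ∑ k, v i k * v j k).det = ∑ k, u k * u k := by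
  obtain ⟨w, hw⟩ := exists_dual u hu
  set S : ℤ := ∑ k, u k * u k with hS
  -- extraction of coefficients, pointwise
  have hcoef : ∀ m : Fin (N+1) → ℤ, (∑ k, m k * u k) = 0 →
      ∃ c : Fin N → ℤ, ∀ k, m k = ∑ j, c j * v j k := by
    intro m hm
    obtain ⟨c, hc, -⟩ := hbasis m hm
    exact ⟨c, fun k => by
      have := congrFun hc k
      simpa [Finset.sum_apply, smul_eq_mul] using this⟩
  -- coefficients for the standard basis vectors
  have hsingle : ∀ i : Fin (N+1),
      ∃ c : Fin N → ℤ, ∀ k, (Pi.single i (1:ℤ) : Fin (N+1) → ℤ) k - u i * w k = ∑ j, c j * v j k := by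
    intro i
    apply hcoef
    have h1 : ∑ k, (Pi.single i (1:ℤ) : Fin (N+1) → ℤ) k * u k = u i := by
      simp [Pi.single_apply, Finset.sum_ite_eq']
    simp [sub_mul, Finset.sum_sub_distrib, h1, mul_assoc, ← Finset.mul_sum, hw]
  choose c hc using hsingle
  -- coefficients for u itself
  have hucoef : ∃ d : Fin N → ℤ, ∀ k, u k - S * w k = ∑ j, d j * v j k := by
    apply hcoef
    simp [sub_mul, Finset.sum_sub_distrib, mul_assoc, ← Finset.mul_sum, hw, hS]
  obtain ⟨d, hd⟩ := hucoef
  set B : Matrix (Fin (N+1)) (Fin (N+1)) ℤ := Matrix.of (Fin.cons w v) with hB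
  set A : Matrix (Fin (N+1)) (Fin (N+1)) ℤ := Matrix.of (Fin.cons u v) with hA
  set C : Matrix (Fin (N+1)) (Fin (N+1)) ℤ :=
    Matrix.of (fun i => Fin.cons (u i) (c i)) with hC
  set E : Matrix (Fin (N+1)) (Fin (N+1)) ℤ :=
    Matrix.of (Fin.cons (Fin.cons S d) (fun i : Fin N => fun j => if j = i.succ then 1 else 0))
    with hE
  -- C * B = 1
  have hCB : C * B = 1 := by
    ext i k
    rw [Matrix.mul_apply, Fin.sum_univ_succ]
    simp only [hC, hB, Matrix.of_apply, Fin.cons_zero, Fin.cons_succ]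
    have := hc i k
    rw [Matrix.one_apply]
    have hsk : (Pi.single i (1:ℤ) : Fin (N+1) → ℤ) k = if i = k then 1 else 0 := by
      simp [Pi.single_apply, eq_comm]
    omega
  have hBunit : B.det * C.det = 1 := by
    have := congrArg Matrix.det hCB
    rw [Matrix.det_mul, Matrix.det_one] at this
    linarith [this]
  have hB2 : B.det ^ 2 = 1 := by
    have : IsUnit B.det := IsUnit.of_mul_eq_one _ hBunit
    rcases Int.isUnit_iff.1 this with h | h <;> simp [h]
  -- E * B = A
  have hEB : E * B = A := by
    ext i k
    rw [Matrix.mul_apply, Fin.sum_univ_succ]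
    refine Fin.cases ?_ (fun i => ?_) i
    · simp only [hE, hB, hA, Matrix.of_apply, Fin.cons_zero, Fin.cons_succ]
      have := hd k
      omega
    · simp only [hE, hB, hA, Matrix.of_apply, Fin.cons_zero, Fin.cons_succ]
      rw [if_neg (Fin.succ_ne_zero i).symm]
      simp [Finset.sum_ite_eq', Fin.succ_injective, Function.Injective.eq_iff]
  -- det E = S
  have hdetE : E.det = S := by
    rw [det_expand_first_col]
    · have h00 : E 0 0 = S := by simp [hE]
      have hsub : E.submatrix Fin.succ Fin.succ = 1 := by
        ext i j
        simp only [hE, Matrix.submatrix_apply, Matrix.of_apply, Fin.cons_succ]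
        rw [Matrix.one_apply]
        simp [Fin.succ_inj, eq_comm]
      rw [h00, hsub, Matrix.det_one, mul_one]
    · intro i
      simp only [hE, Matrix.of_apply, Fin.cons_succ]
      exact if_neg (Fin.succ_ne_zero i).symm.elim -- works
  -- A * Aᵀ
  have hAA0 : ∀ i : Fin N, (A * A.transpose) i.succ 0 = 0 := by
    intro i
    rw [Matrix.mul_apply]
    simpa [hA, Matrix.transpose_apply] using hmem i
  have hAA00 : (A * A.transpose) 0 0 = S := by
    rw [Matrix.mul_apply]
    simp [hA, Matrix.transpose_apply, hS]
  have hAAsub : (A * A.transpose).submatrix Fin.succ Fin.succ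
      = Matrix.of (fun i j : Fin N => ∑ k, v i k * v j k) := by
    ext i j
    rw [Matrix.submatrix_apply, Matrix.mul_apply]
    simp [hA, Matrix.transpose_apply]
  have hdetAA : (A * A.transpose).det
      = S * (Matrix.of fun i j : Fin N => ∑ k, v i k * v j k).det := by
    rw [det_expand_first_col _ hAA0, hAA00, hAAsub]
  have hdetA : A.det = S * B.det := by
    rw [← hEB, Matrix.det_mul, hdetE]
  have hSsq : (A * A.transpose).det = S ^ 2 := by
    rw [Matrix.det_mul, Matrix.det_transpose, hdetA]
    have : (S * B.det) * (S * B.det) = S^2 * B.det^2 := by ring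
    rw [this, hB2, mul_one]
  have hSpos : 0 < S := by
    obtain ⟨i, hi⟩ := Function.ne_iff.1 hu.1
    have hi' : (0:ℤ) < u i * u i := mul_self_pos.2 hi
    have hle : u i * u i ≤ S :=
      Finset.single_le_sum (fun k _ => mul_self_nonneg (u k)) (Finset.mem_univ i)
    omega
  have := hdetAA.symm.trans hSsq
  have : S * (Matrix.of fun i j : Fin N => ∑ k, v i k * v j k).det = S * S := by
    rw [this]; ring
  exact mul_left_cancel₀ (by omega) this

/-- Lemma 5.4 of the paper: if `u ∈ ℤ^n` is primitive and `v_1, …, v_{n-1}` is a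
`ℤ`-basis of the sublattice `Λ = {m ∈ ℤ^n : ⟨m, u⟩ = 0}`, then the Gram
determinant `det(⟨v_i, v_j⟩)` equals `‖u‖²`; equivalently, the `(n-1)`-volume of
a fundamental parallelepiped of `Λ` in the hyperplane `u^⊥` equals `‖u‖`. -/
theorem stmt3 (n : ℕ) (hn : 2 ≤ n) (u : Fin n → ℤ) (hu : IsPrimitiveVec u)
    (v : Fin (n - 1) → Fin n → ℤ)
    (hmem : ∀ j, (∑ k, v j k * u k) = 0)
    (hbasis : ∀ m : Fin n → ℤ, (∑ k, m k * u k) = 0 →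
      ∃! c : Fin (n - 1) → ℤ, m = ∑ j, c j • v j) :
    (Matrix.of fun i j : Fin (n - 1) => ⟪toEuc n (v i), toEuc n (v j)⟫).det
      = ‖toEuc n u‖ ^ 2 := by
  obtain ⟨N, rfl⟩ : ∃ N, n = N + 1 := ⟨n - 1, by omega⟩
  have hkey := key u hu v hmem hbasis
  have hentry : (Matrix.of fun i j : Fin (N + 1 - 1) => ⟪toEuc (N+1) (v i), toEuc (N+1) (v j)⟫)
      = (Matrix.of fun i j : Fin N => (∑ k, v i k * v j k : ℤ)).map
          (Int.castRingHom ℝ) := by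
    ext i j
    simp only [Matrix.of_apply, Matrix.map_apply, toEuc, PiLp.inner_apply,
      RCLike.inner_apply, conj_trivial, Int.coe_castRingHom]
    push_cast
    exact Finset.sum_congr rfl (fun _ _ => mul_comm _ _)
  rw [hentry, ← real_inner_self_eq_norm_sq]
  have h2 : ⟪toEuc (N+1) u, toEuc (N+1) u⟫ = ((∑ k, u k * u k : ℤ) : ℝ) := by
    simp only [toEuc, PiLp.inner_apply, RCLike.inner_apply, conj_trivial]
    push_cast
    rfl
  rw [h2, ← hkey]
  exact (RingHom.map_det (Int.castRingHom ℝ) _).symm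
end

section
/- Let K be a field and E a K-vector space of finite dimension r ≥ 1. Let E(·) be a filtration of E with jump sum ĩ = Σ_{i∈ℤ} i·(dim_K E(i) − dim_K E(i−1)). For l ∈ ℤ, let W_l ⊆ Λ^r E be the subspace spanned by all wedges v_1 ∧ ⋯ ∧ v_r such that there exist integers i_1, …, i_r with i_1 + ⋯ + i_r = l and v_j ∈ E(i_j) for each j. Then W_l = 0 for every l < ĩ and W_l = Λ^r E for every l ≥ ĩ. In particular, ĩ is the smallest integer l for which W_l ≠ 0. -/
open ExteriorAlgebra

private lemma aux_count (m r : ℕ) :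
    (∑ k : Fin r, (if (k : ℕ) < m then (1 : ℤ) else 0)) = ((min m r : ℕ) : ℤ) := by
  rw [Fin.sum_univ_eq_sum_range (fun k => if k < m then (1 : ℤ) else 0) r]
  induction r with
  | zero => simp
  | succ n ih =>
    rw [Finset.sum_range_succ, ih]
    split_ifs with h
    · have hmin : min m (n + 1) = min m n + 1 := by omega
      rw [hmin]; push_cast; ring
    · have hmin : min m (n + 1) = min m n := by omega
      rw [hmin]; ring

private lemma aux_indep {K E : Type*} [Field K] [AddCommGroup E] [Module K E]
    [FiniteDimensional K E] :
    ∀ (n : ℕ) (V : Fin n → Submodule K E),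
      (∀ k : Fin n, (k : ℕ) + 1 ≤ Module.finrank K (V k)) →
      ∃ e : Fin n → E, LinearIndependent K e ∧ ∀ k, e k ∈ V k := by
  intro n
  induction n with
  | zero => exact fun V _ => ⟨fun k => k.elim0, linearIndependent_empty_type, fun k => k.elim0⟩
  | succ n ih =>
    intro V hV
    obtain ⟨e', he', hm'⟩ := ih (fun k => V k.castSucc)
      (fun k => by simpa using hV k.castSucc)
    have h1 : Module.finrank K (Submodule.span K (Set.range e')) = n := by
      rw [finrank_span_eq_card he', Fintype.card_fin]
    have h2 : (n : ℕ) + 1 ≤ Module.finrank K (V (Fin.last n)) := by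
      simpa using hV (Fin.last n)
    have hne : ¬ (V (Fin.last n) ≤ Submodule.span K (Set.range e')) := by
      intro hle
      have h3 := Submodule.finrank_mono hle
      rw [h1] at h3
      omega
    obtain ⟨x, hxV, hxs⟩ := SetLike.not_le_iff_exists.mp hne
    refine ⟨Fin.snoc e' x, ?_, ?_⟩
    · rw [linearIndependent_fin_snoc]; exact ⟨he', hxs⟩
    · intro k
      refine Fin.lastCases ?_ (fun i => ?_) k
      · simpa using hxV
      · simpa using hm' i

/-- Proposition 2.11 of the paper (linear-algebraic content): for a filtration
`E(·)` of an `r`-dimensional vector space `E` with jump sum `ĩ`, the subspace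
`W_l` of `⋀^r E` spanned by the wedges `v_1 ∧ ⋯ ∧ v_r` with `v_j ∈ E(i_j)` and
`Σ i_j = l` is `0` for `l < ĩ` and all of `⋀^r E` for `l ≥ ĩ`. -/
theorem stmt4 (K : Type*) [Field K] (E : Type*) [AddCommGroup E] [Module K E]
    [FiniteDimensional K E] (r : ℕ) (hr : 1 ≤ r)
    (hdim : Module.finrank K E = r)
    (Efil : ℤ → Submodule K E) (hmono : Monotone Efil)
    (hbot : ∃ i₀ : ℤ, ∀ i ≤ i₀, Efil i = ⊥)
    (htop : ∃ i₁ : ℤ, ∀ i ≥ i₁, Efil i = ⊤)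
    (itilde : ℤ)
    (hitilde : itilde = ∑ᶠ i : ℤ,
      i * ((Module.finrank K (Efil i) : ℤ) - (Module.finrank K (Efil (i - 1)) : ℤ)))
    (W : ℤ → Submodule K (ExteriorAlgebra K E))
    (hW : ∀ l : ℤ, W l = Submodule.span K
      {w : ExteriorAlgebra K E | ∃ (v : Fin r → E) (ix : Fin r → ℤ),
        (∑ j, ix j) = l ∧ (∀ j, v j ∈ Efil (ix j)) ∧ w = ιMulti K r v}) :
    (∀ l : ℤ, l < itilde → W l = ⊥) ∧ (∀ l : ℤ, itilde ≤ l → W l = ⋀[K]^r E) := by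
  classical
  obtain ⟨i₀, hbot⟩ := hbot
  obtain ⟨i₁, htop⟩ := htop
  set I0 : ℤ := i₀ with hI0
  set I1 : ℤ := max (i₀ + 1) i₁ with hI1
  have hI01 : I0 < I1 := by rw [hI0, hI1]; exact lt_of_lt_of_le (by omega) (le_max_left _ _)
  set g : ℤ → ℕ := fun i => Module.finrank K (Efil i) with hg
  have hg0 : ∀ i ≤ I0, g i = 0 := by
    intro i hi
    simp only [hg]
    rw [hbot i hi]
    exact finrank_bot K E
  have hgr : ∀ i, I1 ≤ i → g i = r := by
    intro i hi
    have h1 : Efil i = ⊤ := htop i (le_trans (le_max_right _ _) hi)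
    simp only [hg]
    rw [h1, finrank_top, hdim]
  have hgmono : Monotone g := fun i j hij => Submodule.finrank_mono (hmono hij)
  have hgle : ∀ i, g i ≤ r := fun i => hdim ▸ Submodule.finrank_le (Efil i)
  -- the jump degrees
  have hDex : ∀ k : Fin r, ∃ d : ℤ, ((k : ℕ) + 1 ≤ g d) ∧
      ∀ z : ℤ, ((k : ℕ) + 1 ≤ g z) → d ≤ z := by
    intro k
    refine Int.exists_least_of_bdd ⟨I0 + 1, fun z hz => ?_⟩
      ⟨I1, by rw [hgr I1 le_rfl]; exact k.isLt⟩
    by_contra h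
    push_neg at h
    have h0 := hg0 z (by omega)
    omega
  choose D hD1 hD2 using hDex
  have hDlb : ∀ k : Fin r, I0 < D k := by
    intro k
    by_contra h
    push_neg at h
    have h1 := hD1 k
    rw [hg0 (D k) h] at h1
    omega
  have hDub : ∀ k : Fin r, D k ≤ I1 := fun k =>
    hD2 k I1 (by rw [hgr I1 le_rfl]; exact k.isLt)
  -- counting identity
  have hgcount : ∀ i : ℤ, (g i : ℤ) = ∑ k : Fin r, (if D k ≤ i then (1 : ℤ) else 0) := by
    intro i
    have h1 : ∀ k : Fin r, (if D k ≤ i then (1 : ℤ) else 0)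
        = (if (k : ℕ) < g i then (1 : ℤ) else 0) := by
      intro k
      have hiff : (D k ≤ i) ↔ ((k : ℕ) < g i) := by
        constructor
        · intro h
          have := le_trans (hD1 k) (hgmono h)
          omega
        · intro h
          exact hD2 k i (by omega)
      simp only [hiff]
    rw [Finset.sum_congr rfl (fun k _ => h1 k), aux_count]
    have h2 := hgle i
    have h3 : min (g i) r = g i := by omega
    rw [h3]
  -- the jump sum equals the sum of jump degrees
  have hsumD : itilde = ∑ k : Fin r, D k := by
    set F : ℤ → ℤ := fun i => i * ((g i : ℤ) - (g (i - 1) : ℤ)) with hF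
    have hsupp : Function.support F ⊆ (Finset.Icc (I0 + 1) I1 : Set ℤ) := by
      intro i hi
      simp only [Function.mem_support, hF] at hi
      by_contra hmem
      simp only [Finset.coe_Icc, Set.mem_Icc, not_and_or, not_le] at hmem
      apply hi
      rcases hmem with h | h
      · rw [hg0 i (by omega), hg0 (i - 1) (by omega)]; ring
      · rw [hgr i (by omega), hgr (i - 1) (by omega)]; ring
    have step1 : itilde = ∑ i ∈ Finset.Icc (I0 + 1) I1, F i := by
      rw [hitilde]
      exact finsum_eq_sum_of_support_subset _ hsupp
    have key : ∀ i ∈ Finset.Icc (I0 + 1) I1,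
        F i = ∑ k : Fin r, (if i = D k then D k else 0) := by
      intro i _
      simp only [hF]
      rw [hgcount i, hgcount (i - 1), ← Finset.sum_sub_distrib, Finset.mul_sum]
      refine Finset.sum_congr rfl fun k _ => ?_
      simp only [mul_sub, mul_ite, mul_one, mul_zero]
      split_ifs <;> omega
    rw [step1, Finset.sum_congr rfl key, Finset.sum_comm]
    refine Finset.sum_congr rfl fun k _ => ?_
    have hmem : D k ∈ Finset.Icc (I0 + 1) I1 := by
      rw [Finset.mem_Icc]
      exact ⟨by have := hDlb k; omega, hDub k⟩
    rw [Finset.sum_eq_single_of_mem (D k) hmem (fun b _ hb => if_neg hb), if_pos rfl]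
  -- adapted linearly independent family
  obtain ⟨e, he, hemem⟩ := aux_indep r (fun k => Efil (D k)) (fun k => hD1 k)
  haveI : Nonempty (Fin r) := ⟨⟨0, hr⟩⟩
  let b : Module.Basis (Fin r) K E :=
    basisOfLinearIndependentOfCardEqFinrank he (by rw [Fintype.card_fin, hdim])
  have hbe : ⇑b = e := coe_basisOfLinearIndependentOfCardEqFinrank he _
  constructor
  · -- vanishing below the jump sum
    intro l hl
    rw [hW l, Submodule.span_eq_bot]
    rintro w ⟨v, ix, hsum, hmemv, rfl⟩
    apply AlternatingMap.map_linearDependent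
    intro hind
    set σ := Tuple.sort ix with hσ
    have hmonoix : Monotone (ix ∘ σ) := Tuple.monotone_sort ix
    have hDle : ∀ k : Fin r, D k ≤ ix (σ k) := by
      intro k
      apply hD2
      have hcard : (k : ℕ) + 1 ≤ r := k.isLt
      have hmemu : ∀ j : Fin ((k : ℕ) + 1), v (σ (Fin.castLE hcard j)) ∈ Efil (ix (σ k)) := by
        intro j
        refine hmono ?_ (hmemv _)
        exact hmonoix (show Fin.castLE hcard j ≤ k by
          simpa [Fin.le_def] using Fin.is_le j)
      set u : Fin ((k : ℕ) + 1) → Efil (ix (σ k)) :=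
        fun j => ⟨v (σ (Fin.castLE hcard j)), hmemu j⟩ with hu
      have hindu : LinearIndependent K u := by
        apply LinearIndependent.of_comp (Efil (ix (σ k))).subtype
        have heq : ((Efil (ix (σ k))).subtype ∘ u)
            = v ∘ (fun j : Fin ((k : ℕ) + 1) => σ (Fin.castLE hcard j)) := rfl
        rw [heq]
        exact hind.comp _ (σ.injective.comp (Fin.strictMono_castLE hcard).injective)
      have hcle := hindu.fintype_card_le_finrank
      rwa [Fintype.card_fin] at hcle
    have hle : itilde ≤ l := by
      rw [hsumD, ← hsum, ← Equiv.sum_comp σ ix]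
      exact Finset.sum_le_sum fun k _ => hDle k
    omega
  · -- fullness at and above the jump sum
    intro l hl
    apply le_antisymm
    · rw [hW l, Submodule.span_le]
      rintro w ⟨v, ix, hsum, hmemv, rfl⟩
      exact ιMulti_range K r (Set.mem_range_self v)
    · rw [← ιMulti_span_fixedDegree K r (M := E), Submodule.span_le]
      rintro w ⟨v, rfl⟩
      set c : Fin r → Fin r → K := fun j k => b.repr (v j) k with hc
      have hvr : ∀ j, v j = ∑ k : Fin r, c j k • e k := by
        intro j
        simp only [hc]
        rw [← hbe]
        exact (b.sum_repr (v j)).symm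
      have hexp : ιMulti K r v = ∑ p : Fin r → Fin r,
          (∏ j, c j (p j)) • ιMulti K r (fun j => e (p j)) := by
        have h1 : ιMulti K r v
            = (ιMulti K r (M := E)).toMultilinearMap (fun j => ∑ k : Fin r, c j k • e k) := by
          rw [AlternatingMap.coe_multilinearMap]
          congr 1
          funext j
          exact hvr j
        rw [h1, MultilinearMap.map_sum]
        refine Finset.sum_congr rfl fun p _ => ?_
        rw [MultilinearMap.map_smul_univ]
        rfl
      rw [hexp]
      apply Submodule.sum_mem
      intro p _
      apply Submodule.smul_mem
      by_cases hp : Function.Injective p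
      · rw [hW l]
        apply Submodule.subset_span
        refine ⟨fun j => e (p j),
          fun j => D (p j) + (if j = (⟨0, hr⟩ : Fin r) then l - itilde else 0), ?_, ?_, rfl⟩
        · rw [Finset.sum_add_distrib]
          have h2 : ∑ j : Fin r, D (p j) = ∑ k : Fin r, D k :=
            Fintype.sum_bijective p (Finite.injective_iff_bijective.mp hp) _ _ (fun j => rfl)
          rw [h2, Finset.sum_ite_eq' Finset.univ (⟨0, hr⟩ : Fin r) (fun _ => l - itilde),
            if_pos (Finset.mem_univ _)]
          omega
        · intro j
          refine hmono (le_add_of_nonneg_right ?_) (hemem (p j))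
          split_ifs <;> omega
      · have h0 : ιMulti K r (fun j => e (p j)) = 0 := by
          obtain ⟨a, a', hab, hne⟩ := Function.not_injective_iff.mp hp
          exact AlternatingMap.map_eq_zero_of_eq _ _ (by rw [hab]) hne
        rw [h0]
        exact Submodule.zero_mem _
end
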